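/- The ellipse E = (Aⁿ − I)^{−1} B(0, e^{−nτ}) contains the parallelogram with vertices ±(1/2)(λ_{n,2}/√(1+γ²))(1, γ) ± (1/2)(λ_{n,1}/√(1+β²))(1, β), where λ_{n,1} = e^{−τn}/|1 − λ₁ⁿ| and λ_{n,2} = e^{−τn}/|λ₂ⁿ − 1|. -/

import Mathlib

/-!
On the eigenvector `u = (1, γ)` the map `Aⁿ - I` acts as multiplication by `λ₂ⁿ - 1`, and on
`v = (1, β)` as multiplication by `λ₁ⁿ - 1`. A point `t u/‖u‖ + s v/‖v‖` of the parallelogram is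
therefore sent to a vector of norm at most `|λ₂ⁿ - 1| |t| + |λ₁ⁿ - 1| |s|`, and the bounds on
`|t|` and `|s|` make each summand at most `e^{-nτ}/2`.
-/

noncomputable def eigVec (γ : ℝ) : EuclideanSpace ℝ (Fin 2) :=
  (WithLp.equiv 2 (Fin 2 → ℝ)).symm ![1, γ]

theorem Matrix.pow_mulVec_of_mulVec_eq_smul {ι R : Type*} [Fintype ι] [DecidableEq ι]
    [CommSemiring R] {A : Matrix ι ι R} {l : R} {v : ι → R} (h : A.mulVec v = l • v) (n : ℕ) :
    (A ^ n).mulVec v = l ^ n • v := by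
  induction n with
  | zero => simp
  | succ k ih =>
    rw [pow_succ, ← Matrix.mulVec_mulVec, h, Matrix.mulVec_smul, ih, smul_smul, ← pow_succ']

lemma norm_eigVec (γ : ℝ) : ‖eigVec γ‖ = Real.sqrt (1 + γ ^ 2) := by
  rw [EuclideanSpace.norm_eq]
  simp [eigVec, Fin.sum_univ_two, sq_abs]

lemma toEuclideanLin_pow_sub_one_eigVec {A : Matrix (Fin 2) (Fin 2) ℝ} {l γ : ℝ}
    (h : A.mulVec ![1, γ] = l • ![1, γ]) (n : ℕ) :
    Matrix.toEuclideanLin (A ^ n - 1) (eigVec γ) = (l ^ n - 1) • eigVec γ := by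
  rw [eigVec, WithLp.equiv_symm_apply, Matrix.toLpLin_toLp, Matrix.toLin'_apply, Matrix.sub_mulVec,
    Matrix.one_mulVec, Matrix.pow_mulVec_of_mulVec_eq_smul h n, sub_smul, one_smul]
  rfl

section NormedSpace

variable {E : Type*} [SeminormedAddCommGroup E] [NormedSpace ℝ E]

lemma norm_div_norm_smul_le (t : ℝ) (u : E) : ‖(t / ‖u‖) • u‖ ≤ |t| := by
  rw [norm_smul, Real.norm_eq_abs, abs_div, abs_norm, div_mul_eq_mul_div, mul_div_assoc]
  exact mul_le_of_le_one_right (abs_nonneg t) (div_self_le_one _)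

lemma norm_map_normalized_add_le (f : E →ₗ[ℝ] E) {u v : E} {a b : ℝ}
    (hu : f u = a • u) (hv : f v = b • v) (t s : ℝ) :
    ‖f ((t / ‖u‖) • u + (s / ‖v‖) • v)‖ ≤ |a| * |t| + |b| * |s| := by
  rw [map_add, map_smul, map_smul, hu, hv, smul_comm _ a, smul_comm _ b]
  refine (norm_add_le _ _).trans (add_le_add ?_ ?_) <;>
    rw [norm_smul, Real.norm_eq_abs] <;>
    exact mul_le_mul_of_nonneg_left (norm_div_norm_smul_le _ _) (abs_nonneg _)

end NormedSpace

-- Also valid for `c = 0`, where `r / |c| = 0` forces `t = 0`.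
lemma abs_mul_le_half_of_abs_le_div {r c t : ℝ} (hr : 0 ≤ r) (ht : |t| ≤ r / |c| / 2) :
    |c| * |t| ≤ r / 2 :=
  calc |c| * |t| ≤ |c| * (r / |c| / 2) := mul_le_mul_of_nonneg_left ht (abs_nonneg c)
    _ = |c| / |c| * (r / 2) := by ring
    _ ≤ r / 2 := mul_le_of_le_one_left (by positivity) (div_self_le_one _)

theorem inscribed_parallelogram_subset_ellipse_general
    (A : Matrix (Fin 2) (Fin 2) ℝ) (l₁ l₂ γ β : ℝ)
    (hγ : A.mulVec ![1, γ] = l₂ • ![1, γ])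
    (hβ : A.mulVec ![1, β] = l₁ • ![1, β])
    (τ : ℝ) (n : ℕ) :
    {x : EuclideanSpace ℝ (Fin 2) | ∃ t s : ℝ,
        |t| ≤ Real.exp (-τ * n) / |l₂ ^ n - 1| / 2 ∧
        |s| ≤ Real.exp (-τ * n) / |1 - l₁ ^ n| / 2 ∧
        x = (t / Real.sqrt (1 + γ ^ 2)) • eigVec γ
          + (s / Real.sqrt (1 + β ^ 2)) • eigVec β}
      ⊆ {x : EuclideanSpace ℝ (Fin 2) |
          ‖Matrix.toEuclideanLin (A ^ n - 1) x‖ ≤ Real.exp (-(n : ℝ) * τ)} := by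
  rintro x ⟨t, s, ht, hs, rfl⟩
  rw [← norm_eigVec, ← norm_eigVec]
  have hr : 0 ≤ Real.exp (-τ * n) := (Real.exp_pos _).le
  rw [← abs_sub_comm] at hs
  calc _ ≤ |l₂ ^ n - 1| * |t| + |l₁ ^ n - 1| * |s| :=
        norm_map_normalized_add_le _ (toEuclideanLin_pow_sub_one_eigVec hγ n)
          (toEuclideanLin_pow_sub_one_eigVec hβ n) t s
    _ ≤ Real.exp (-τ * n) / 2 + Real.exp (-τ * n) / 2 :=
        add_le_add (abs_mul_le_half_of_abs_le_div hr ht) (abs_mul_le_half_of_abs_le_div hr hs)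
    _ = Real.exp (-(n : ℝ) * τ) := by rw [add_halves, neg_mul, neg_mul, mul_comm]

/-- The ellipse `(Aⁿ - I)⁻¹ B(0, e^{-nτ})` contains the parallelogram with
vertices `± (λ_{n,2}/2) (1,γ)/√(1+γ²) ± (λ_{n,1}/2) (1,β)/√(1+β²)`, where
`λ_{n,1} = e^{-τn}/|1 - λ₁ⁿ|` and `λ_{n,2} = e^{-τn}/|λ₂ⁿ - 1|`. -/
theorem inscribed_parallelogram_subset_ellipse
    (A : Matrix (Fin 2) (Fin 2) ℝ) (l₁ l₂ γ β : ℝ)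
    (h0 : 0 < |l₁|) (h1 : |l₁| < 1) (h2 : 1 < |l₂|)
    (hγ : A.mulVec ![1, γ] = l₂ • ![1, γ])
    (hβ : A.mulVec ![1, β] = l₁ • ![1, β])
    (τ : ℝ) (hτ : 0 < τ) (n : ℕ) (hn : 1 ≤ n)
    (hinv : IsUnit (A ^ n - 1)) :
    {x : EuclideanSpace ℝ (Fin 2) | ∃ t s : ℝ,
        |t| ≤ Real.exp (-τ * n) / |l₂ ^ n - 1| / 2 ∧
        |s| ≤ Real.exp (-τ * n) / |1 - l₁ ^ n| / 2 ∧
        x = (t / Real.sqrt (1 + γ ^ 2)) • eigVec γ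
          + (s / Real.sqrt (1 + β ^ 2)) • eigVec β}
      ⊆ {x : EuclideanSpace ℝ (Fin 2) |
          ‖Matrix.toEuclideanLin (A ^ n - 1) x‖ ≤ Real.exp (-(n : ℝ) * τ)} :=
  inscribed_parallelogram_subset_ellipse_general A l₁ l₂ γ β hγ hβ τ n
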